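/- arXiv:1601.07403 — 6 statements merged into one kernel-verified Lean document; each statement's English description precedes it below -/
import Mathlib

section
/- Let A be a finite idempotent algebra with at least 3 elements, and let ≤ be a compatible partial order on A whose comparability graph is connected (any two elements of A are joined by a finite sequence of elements in which consecutive elements are comparable). Then the hypergraph H(A) is connected: any two elements of A are connected in H(A). -/
namespace UA

/-- Terms over a signature `(ι, ar)` with `n` variables. -/
inductive Term (ι : Type) (ar : ι → ℕ) (n : ℕ) : Type where
  | var : Fin n → Term ι ar n
  | app : (i : ι) → (Fin (ar i) → Term ι ar n) → Term ι ar n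

/-- Evaluation of a term in an algebra with operations `ops`. -/
def Term.eval {ι : Type} {ar : ι → ℕ} {A : Type} (ops : ∀ i : ι, (Fin (ar i) → A) → A)
    {n : ℕ} : Term ι ar n → (Fin n → A) → A
  | .var j, x => x j
  | .app i ts, x => ops i fun k => Term.eval ops (ts k) x

variable {ι : Type} {ar : ι → ℕ} {A : Type}

/-- An algebra is idempotent if every basic operation is. -/
def Idempotent (ops : ∀ i : ι, (Fin (ar i) → A) → A) : Prop :=
  ∀ (i : ι) (x : A), ops i (fun _ => x) = x

/-- A subuniverse: a subset closed under all basic operations. -/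
def IsSubuniverse (ops : ∀ i : ι, (Fin (ar i) → A) → A) (S : Set A) : Prop :=
  ∀ (i : ι) (xs : Fin (ar i) → A), (∀ k, xs k ∈ S) → ops i xs ∈ S

/-- The subuniverse generated by `X`. -/
def Sg (ops : ∀ i : ι, (Fin (ar i) → A) → A) (X : Set A) : Set A :=
  ⋂₀ {S | IsSubuniverse ops S ∧ X ⊆ S}

/-- A tolerance: a reflexive symmetric compatible binary relation. -/
def IsTolerance (ops : ∀ i : ι, (Fin (ar i) → A) → A) (τ : A → A → Prop) : Prop :=
  (∀ x, τ x x) ∧ (∀ x y, τ x y → τ y x) ∧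
  ∀ (i : ι) (xs ys : Fin (ar i) → A), (∀ k, τ (xs k) (ys k)) → τ (ops i xs) (ops i ys)

/-- A congruence: a compatible equivalence relation. -/
def IsCongruence (ops : ∀ i : ι, (Fin (ar i) → A) → A) (θ : A → A → Prop) : Prop :=
  Equivalence θ ∧
  ∀ (i : ι) (xs ys : Fin (ar i) → A), (∀ k, θ (xs k) (ys k)) → θ (ops i xs) (ops i ys)

/-- A congruence of the subalgebra with universe `B`, viewed as a partial
equivalence relation on the big algebra whose domain is exactly `B` and which is
compatible with all operations. -/
def IsCongruenceOn (ops : ∀ i : ι, (Fin (ar i) → A) → A) (B : Set A)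
    (θ : A → A → Prop) : Prop :=
  (∀ x y, θ x y → x ∈ B ∧ y ∈ B) ∧
  (∀ x ∈ B, θ x x) ∧
  (∀ x y, θ x y → θ y x) ∧
  (∀ x y z, θ x y → θ y z → θ x z) ∧
  ∀ (i : ι) (xs ys : Fin (ar i) → A), (∀ k, θ (xs k) (ys k)) → θ (ops i xs) (ops i ys)

/-- `f` is a binary term operation of the algebra. -/
def IsTermOp2 (ops : ∀ i : ι, (Fin (ar i) → A) → A) (f : A → A → A) : Prop :=
  ∃ t : Term ι ar 2, ∀ x y, f x y = t.eval ops ![x, y]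

/-- `g` is a ternary term operation of the algebra. -/
def IsTermOp3 (ops : ∀ i : ι, (Fin (ar i) → A) → A) (g : A → A → A → A) : Prop :=
  ∃ t : Term ι ar 3, ∀ x y z, g x y z = t.eval ops ![x, y, z]

/-- Connectivity of `a` and `b` in the hypergraph `H(A)` whose hyperedges are the
nonempty proper subuniverses: a chain of hyperedges with consecutive ones
intersecting, the first containing `a`, the last containing `b`. -/
def HConnected (ops : ∀ i : ι, (Fin (ar i) → A) → A) (a b : A) : Prop :=
  ∃ L : List (Set A),
    (∀ S ∈ L, IsSubuniverse ops S ∧ S.Nonempty ∧ S ≠ Set.univ) ∧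
    L.Chain' (fun S T => (S ∩ T).Nonempty) ∧
    ∃ h : L ≠ [], a ∈ L.head h ∧ b ∈ L.getLast h


/-! Up-sets and down-sets of a compatible order are subuniverses because the algebra is
idempotent. If `a ≤ b`, the up-set of `a` or the down-set of `b` is a proper hyperedge
containing both, unless `a` is the least and `b` the greatest element; then any third
element `c` gives the chain `↓c, ↑c` from `a` to `b`. Connectivity of the comparability
graph finishes the proof. -/

def IsCompatible (ops : ∀ i : ι, (Fin (ar i) → A) → A) (r : A → A → Prop) : Prop :=
  ∀ (i : ι) (xs ys : Fin (ar i) → A), (∀ k, r (xs k) (ys k)) → r (ops i xs) (ops i ys)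

section

variable {ops : ∀ i : ι, (Fin (ar i) → A) → A}

theorem IsCompatible.flip {r : A → A → Prop} (h : IsCompatible ops r) :
    IsCompatible ops (flip r) :=
  fun i xs ys hxy => h i ys xs hxy

theorem isSubuniverse_setOf_rel {r : A → A → Prop} (hidem : Idempotent ops)
    (hr : IsCompatible ops r) (a : A) : IsSubuniverse ops {x | r a x} := by
  intro i xs hxs
  simpa only [Set.mem_ofPred_eq, hidem i a] using hr i (fun _ => a) xs hxs

theorem exists_ne_ne_of_three_le_card [Fintype A] (hcard : 3 ≤ Fintype.card A) (a b : A) :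
    ∃ c, c ≠ a ∧ c ≠ b := by
  classical
  have : ({a, b} : Finset A).card < (Finset.univ : Finset A).card :=
    Finset.card_le_two.trans_lt (by rw [Finset.card_univ]; omega)
  obtain ⟨c, -, hc⟩ := Finset.exists_mem_notMem_of_card_lt_card this
  simp only [Finset.mem_insert, Finset.mem_singleton, not_or] at hc
  exact ⟨c, hc⟩

namespace HConnected

theorem of_mem {S : Set A} (hS : IsSubuniverse ops S) (hS_ne : S ≠ Set.univ) {a b : A}
    (ha : a ∈ S) (hb : b ∈ S) : HConnected ops a b :=
  ⟨[S], by simpa using ⟨hS, ⟨a, ha⟩, hS_ne⟩, List.isChain_singleton _, List.cons_ne_nil _ _,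
    ha, hb⟩

theorem trans {a b c : A} (hab : HConnected ops a b) (hbc : HConnected ops b c) :
    HConnected ops a c := by
  obtain ⟨L₁, hL₁, hchain₁, hne₁, ha, hb⟩ := hab
  obtain ⟨L₂, hL₂, hchain₂, hne₂, hb', hc⟩ := hbc
  refine ⟨L₁ ++ L₂, ?_, ?_, by simp [hne₁], ?_, ?_⟩
  · intro S hS
    rcases List.mem_append.mp hS with hS | hS
    exacts [hL₁ S hS, hL₂ S hS]
  · refine List.isChain_append.mpr ⟨hchain₁, hchain₂, ?_⟩
    intro S hS T hT
    rw [List.getLast?_eq_some_getLast hne₁, Option.mem_some_iff] at hS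
    rw [List.head?_eq_some_head hne₂, Option.mem_some_iff] at hT
    exact ⟨b, hS ▸ hb, hT ▸ hb'⟩
  · rwa [List.head_append_of_ne_nil hne₁]
  · rwa [List.getLast_append_of_ne_nil _ hne₂]

theorem symm {a b : A} (hab : HConnected ops a b) : HConnected ops b a := by
  obtain ⟨L, hL, hchain, hne, ha, hb⟩ := hab
  refine ⟨L.reverse, fun S hS => hL S (List.mem_reverse.mp hS), ?_,
    List.reverse_ne_nil_iff.mpr hne, ?_, ?_⟩
  · exact List.isChain_reverse.mpr (hchain.imp fun _ _ h => Set.inter_comm _ _ ▸ h)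
  · rwa [List.head_reverse]
  · rwa [List.getLast_reverse]

theorem of_le [Fintype A] (hcard : 3 ≤ Fintype.card A) (hidem : Idempotent ops)
    {le : A → A → Prop} (hrefl : ∀ x, le x x) (hantisymm : ∀ x y, le x y → le y x → x = y)
    (hcompat : IsCompatible ops le) {a b : A} (hab : le a b) : HConnected ops a b := by
  have hup := isSubuniverse_setOf_rel hidem hcompat
  have hdown := isSubuniverse_setOf_rel hidem hcompat.flip
  by_cases hup_a : {x | le a x} = Set.univ
  swap; · exact of_mem (hup a) hup_a (hrefl a) hab
  by_cases hdown_b : {x | flip le b x} = Set.univ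
  swap; · exact of_mem (hdown b) hdown_b hab (hrefl b)
  rw [Set.eq_univ_iff_forall] at hup_a hdown_b
  obtain ⟨c, hca, hcb⟩ := exists_ne_ne_of_three_le_card hcard a b
  have hdown_c : {x | flip le c x} ≠ Set.univ :=
    (Set.ne_univ_iff_exists_notMem _).mpr ⟨b, fun hbc => hcb (hantisymm c b (hdown_b c) hbc)⟩
  have hup_c : {x | le c x} ≠ Set.univ :=
    (Set.ne_univ_iff_exists_notMem _).mpr ⟨a, fun hac => hca (hantisymm c a hac (hup_a c))⟩
  exact (of_mem (hdown c) hdown_c (hup_a c) (hrefl c)).trans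
    (of_mem (hup c) hup_c (hrefl c) (hdown_b c))

end HConnected

end

theorem stmt_3_general {ι : Type} {ar : ι → ℕ} {A : Type} [Fintype A]
    (hcard : 3 ≤ Fintype.card A)
    (ops : ∀ i : ι, (Fin (ar i) → A) → A)
    (hidem : Idempotent ops)
    (le : A → A → Prop)
    (hrefl : ∀ x, le x x)
    (hantisymm : ∀ x y, le x y → le y x → x = y)
    (hcompat : ∀ (i : ι) (xs ys : Fin (ar i) → A),
      (∀ k, le (xs k) (ys k)) → le (ops i xs) (ops i ys))
    (hconn : ∀ x y : A, Relation.ReflTransGen (fun u v => le u v ∨ le v u) x y) :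
    ∀ a b : A, HConnected ops a b := by
  have hcomparable : ∀ {x y}, le x y → HConnected ops x y :=
    HConnected.of_le hcard hidem hrefl hantisymm hcompat
  intro a b
  induction hconn a b with
  | refl => exact hcomparable (hrefl a)
  | tail _ hyz ih =>
    rcases hyz with hyz | hzy
    · exact ih.trans (hcomparable hyz)
    · exact ih.trans (hcomparable hzy).symm

/-- a finite idempotent algebra of size ≥ 3 with a compatible partial
order whose comparability graph is connected has a connected hypergraph H(A). -/
theorem stmt_3 {ι : Type} {ar : ι → ℕ} {A : Type} [Fintype A] [Nonempty A]
    (hcard : 3 ≤ Fintype.card A)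
    (ops : ∀ i : ι, (Fin (ar i) → A) → A)
    (hidem : Idempotent ops)
    (le : A → A → Prop)
    (hrefl : ∀ x, le x x)
    (hantisymm : ∀ x y, le x y → le y x → x = y)
    (htrans : ∀ x y z, le x y → le y z → le x z)
    (hcompat : ∀ (i : ι) (xs ys : Fin (ar i) → A),
      (∀ k, le (xs k) (ys k)) → le (ops i xs) (ops i ys))
    (hconn : ∀ x y : A, Relation.ReflTransGen (fun u v => le u v ∨ le v u) x y) :
    ∀ a b : A, HConnected ops a b :=
  stmt_3_general hcard ops hidem le hrefl hantisymm hcompat hconn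

end UA
end

section
/- Let A be a finite idempotent algebra and f a binary term operation of A. Then there exists a binary term operation f′ of A such that f′(x, f′(x,y)) = f′(x,y) for all x,y ∈ A, and such that for all a,b ∈ A and every congruence θ of Sg{a,b}: if f(a,b) θ b and f(b,a) θ b, then f′(a,b) θ b and f′(b,a) θ b. -/
/-!
Take `f' x = (f x)^[N]` with `N = |A|!`. For a self-map of an `n`-element set every orbit has
entered its cycle after `n ≤ n!` steps, and the cycle length divides `n!`, so the `n!`-th iterate
is idempotent. Both `g = f a` and `g = f b` preserve `θ` and satisfy `g b θ b` (the latter because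
`f b b = b`), so `g c θ b` propagates to `g^[k+1] c θ b`; take `c = b`, resp. `c = a`.
-/

namespace UA

variable {ι : Type} {ar : ι → ℕ} {A : Type}

theorem _root_.Function.iterate_mem_periodicPts_of_card_le {α : Type*} [Fintype α]
    (g : α → α) (x : α) {k : ℕ} (hk : Fintype.card α ≤ k) :
    g^[k] x ∈ Function.periodicPts g := by
  obtain ⟨i, j, hij, hgij⟩ := Fintype.exists_ne_map_eq_of_card_lt
    (fun i : Fin (Fintype.card α + 1) => g^[i] x) (by simp)
  wlog hlt : i < j generalizing i j
  · exact this j i hij.symm hgij.symm (lt_of_le_of_ne (not_lt.mp hlt) hij.symm)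
  have hperiodic : Function.IsPeriodicPt g (j - i) (g^[i] x) := by
    change g^[j - i] (g^[i] x) = g^[i] x
    rw [← Function.iterate_add_apply, Nat.sub_add_cancel hlt.le]
    exact hgij.symm
  have hk' : k = (k - i) + i := by omega
  rw [hk', Function.iterate_add_apply]
  exact Function.mk_mem_periodicPts (by omega) (hperiodic.apply_iterate (k - i))

theorem _root_.Function.iterate_factorial_card_iterate_factorial_card {α : Type*} [Fintype α]
    (g : α → α) (x : α) :
    g^[(Fintype.card α).factorial] (g^[(Fintype.card α).factorial] x) =
      g^[(Fintype.card α).factorial] x :=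
  Function.isPeriodicPt_factorial_card_of_mem_periodicPts
    (g.iterate_mem_periodicPts_of_card_le x (Nat.self_le_factorial _))

theorem _root_.Function.iterate_succ_rel {α : Type*} {r : α → α → Prop}
    (hr : ∀ x y z, r x y → r y z → r x z)
    {g : α → α} (hg : ∀ ⦃x y⦄, r x y → r (g x) (g y)) {b c : α}
    (hc : r (g c) b) (hb : r (g b) b) (k : ℕ) : r (g^[k + 1] c) b := by
  induction k with
  | zero => exact hc
  | succ k ih =>
    rw [Function.iterate_succ_apply']
    exact hr _ _ _ (hg ih) hb

theorem subset_Sg (ops : ∀ i : ι, (Fin (ar i) → A) → A) (X : Set A) : X ⊆ Sg ops X :=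
  fun _ hx _ hS => hS.2 hx

def Term.subst {n m : ℕ} : Term ι ar n → (Fin n → Term ι ar m) → Term ι ar m
  | .var j, σ => σ j
  | .app i ts, σ => .app i fun k => (ts k).subst σ

theorem Term.eval_subst (ops : ∀ i : ι, (Fin (ar i) → A) → A) {n m : ℕ}
    (t : Term ι ar n) (σ : Fin n → Term ι ar m) (x : Fin m → A) :
    (t.subst σ).eval ops x = t.eval ops fun j => (σ j).eval ops x := by
  induction t with
  | var j => rfl
  | app i ts ih => exact congrArg (ops i) (funext ih)

theorem Term.eval_const {ops : ∀ i : ι, (Fin (ar i) → A) → A} (hidem : Idempotent ops)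
    {n : ℕ} (t : Term ι ar n) (x : A) : t.eval ops (fun _ => x) = x := by
  induction t with
  | var j => rfl
  | app i ts ih =>
    simp only [Term.eval, ih]
    exact hidem i x

theorem IsCongruenceOn.eval {ops : ∀ i : ι, (Fin (ar i) → A) → A} {B : Set A}
    {θ : A → A → Prop} (hθ : IsCongruenceOn ops B θ) {n : ℕ} (t : Term ι ar n)
    {xs ys : Fin n → A} (h : ∀ j, θ (xs j) (ys j)) : θ (t.eval ops xs) (t.eval ops ys) := by
  induction t with
  | var j => exact h j
  | app i ts ih => exact hθ.2.2.2.2 i _ _ ih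

namespace IsTermOp2

variable {ops : ∀ i : ι, (Fin (ar i) → A) → A} {f g : A → A → A}

theorem comp_right (hf : IsTermOp2 ops f) (hg : IsTermOp2 ops g) :
    IsTermOp2 ops fun x y => f x (g x y) := by
  obtain ⟨t, ht⟩ := hf
  obtain ⟨s, hs⟩ := hg
  refine ⟨t.subst ![.var 0, s], fun x y => ?_⟩
  have hargs : (fun j => (![.var 0, s] j).eval ops ![x, y]) = ![x, g x y] := by
    funext j
    fin_cases j
    · rfl
    · exact (hs x y).symm
  rw [Term.eval_subst, hargs, ← ht]

theorem iterate_right (hf : IsTermOp2 ops f) (k : ℕ) :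
    IsTermOp2 ops fun x y => (f x)^[k] y := by
  induction k with
  | zero => exact ⟨.var 1, fun _ _ => rfl⟩
  | succ k ih =>
    simp only [Function.iterate_succ_apply']
    exact hf.comp_right ih

theorem apply_self (hidem : Idempotent ops) (hf : IsTermOp2 ops f) (x : A) : f x x = x := by
  obtain ⟨t, ht⟩ := hf
  have hconst : (![x, x] : Fin 2 → A) = fun _ => x := by
    funext j
    fin_cases j <;> rfl
  rw [ht, hconst, Term.eval_const hidem]

theorem rel_of_isCongruenceOn {B : Set A} {θ : A → A → Prop} (hf : IsTermOp2 ops f)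
    (hθ : IsCongruenceOn ops B θ) {x x' y y' : A} (hx : θ x x') (hy : θ y y') :
    θ (f x y) (f x' y') := by
  obtain ⟨t, ht⟩ := hf
  rw [ht, ht]
  refine hθ.eval t fun j => ?_
  fin_cases j
  · exact hx
  · exact hy

end IsTermOp2

theorem stmt_6_general {ι : Type} {ar : ι → ℕ} {A : Type} [Fintype A]
    (ops : ∀ i : ι, (Fin (ar i) → A) → A)
    (hidem : Idempotent ops)
    (f : A → A → A) (hf : IsTermOp2 ops f) :
    ∃ f' : A → A → A, IsTermOp2 ops f' ∧
      (∀ x y : A, f' x (f' x y) = f' x y) ∧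
      ∀ (a b : A) (θ : A → A → Prop),
        IsCongruenceOn ops (Sg ops ({a, b} : Set A)) θ →
        θ (f a b) b → θ (f b a) b →
        θ (f' a b) b ∧ θ (f' b a) b := by
  obtain ⟨k, hk⟩ := Nat.exists_eq_succ_of_ne_zero (Fintype.card A).factorial_ne_zero
  refine ⟨fun x y => (f x)^[(Fintype.card A).factorial] y, hf.iterate_right _,
    fun x y => (f x).iterate_factorial_card_iterate_factorial_card y, ?_⟩
  intro a b θ hθ hab hba
  have ha : θ a a := hθ.2.1 a (subset_Sg ops _ (by simp))
  have hb : θ b b := hθ.2.1 b (subset_Sg ops _ (by simp))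
  have hbb : θ (f b b) b := by rwa [hf.apply_self hidem]
  simp only [hk]
  exact ⟨Function.iterate_succ_rel hθ.2.2.2.1 (fun _ _ => hf.rel_of_isCongruenceOn hθ ha) hab hab k,
    Function.iterate_succ_rel hθ.2.2.2.1 (fun _ _ => hf.rel_of_isCongruenceOn hθ hb) hba hbb k⟩

/-- any binary term operation can be improved to one satisfying
`f'(x, f'(x,y)) = f'(x,y)` while keeping its semilattice behaviour modulo any
congruence of any 2-generated subalgebra. -/
theorem stmt_6 {ι : Type} {ar : ι → ℕ} {A : Type} [Fintype A] [Nonempty A]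
    (ops : ∀ i : ι, (Fin (ar i) → A) → A)
    (hidem : Idempotent ops)
    (f : A → A → A) (hf : IsTermOp2 ops f) :
    ∃ f' : A → A → A, IsTermOp2 ops f' ∧
      (∀ x y : A, f' x (f' x y) = f' x y) ∧
      ∀ (a b : A) (θ : A → A → Prop),
        IsCongruenceOn ops (Sg ops ({a, b} : Set A)) θ →
        θ (f a b) b → θ (f b a) b →
        θ (f' a b) b ∧ θ (f' b a) b :=
  stmt_6_general ops hidem f hf

end UA
end

section
/- Let A be a finite idempotent algebra and h a ternary term operation of A. Then there exists a ternary term operation h′ of A such that h′(h′(x,y,y), y, y) = h′(x,y,y) for all x,y ∈ A, and such that for all a,b ∈ A and every congruence θ of Sg{a,b}: if h(a,b,b) θ a and h(b,b,a) θ a, then h′(a,b,b) θ a and h′(b,b,a) θ a. -/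
/-! Write `f_y = h (·, y, y)`. Every finite monoid has a uniform idempotent power `N > 0`; applied
to the self-maps of `A` this makes every `f_y^[N]` idempotent. Take
`h' (x, y, z) = f_y^[N - 1] (h (x, y, z))`, so that `h' (x, y, y) = f_y^[N] x` is idempotent in `x`.
Modulo a congruence `θ` of `Sg {a, b}` the map `f_b` is compatible and sends `a` into `a^θ`,
so all its iterates preserve `a^θ`, which contains `h (a, b, b)` and `h (b, b, a)`. -/

namespace UA

variable {ι : Type} {ar : ι → ℕ} {A : Type}

theorem Term.eval_rel (ops : ∀ i : ι, (Fin (ar i) → A) → A) {θ : A → A → Prop}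
    (hθ : ∀ (i : ι) (xs ys : Fin (ar i) → A), (∀ k, θ (xs k) (ys k)) →
      θ (ops i xs) (ops i ys))
    {n : ℕ} (t : Term ι ar n) {xs ys : Fin n → A} (hxy : ∀ j, θ (xs j) (ys j)) :
    θ (t.eval ops xs) (t.eval ops ys) := by
  induction t with
  | var j => exact hxy j
  | app i ts ih => exact hθ i _ _ ih

namespace IsTermOp3

variable {ops : ∀ i : ι, (Fin (ar i) → A) → A}

theorem snd : IsTermOp3 ops fun _ y _ => y :=
  ⟨.var 1, fun _ _ _ => rfl⟩

theorem comp {h g₁ g₂ g₃ : A → A → A → A} (hh : IsTermOp3 ops h)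
    (hg₁ : IsTermOp3 ops g₁) (hg₂ : IsTermOp3 ops g₂) (hg₃ : IsTermOp3 ops g₃) :
    IsTermOp3 ops fun x y z => h (g₁ x y z) (g₂ x y z) (g₃ x y z) := by
  obtain ⟨t, ht⟩ := hh
  obtain ⟨t₁, ht₁⟩ := hg₁
  obtain ⟨t₂, ht₂⟩ := hg₂
  obtain ⟨t₃, ht₃⟩ := hg₃
  refine ⟨t.subst ![t₁, t₂, t₃], fun x y z => ?_⟩
  dsimp only
  rw [ht, Term.eval_subst]
  congr 1
  funext j
  fin_cases j <;> simp [ht₁, ht₂, ht₃]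

theorem iterate_fst {h : A → A → A → A} (hh : IsTermOp3 ops h) (k : ℕ) :
    IsTermOp3 ops fun x y z => (fun u => h u y y)^[k] (h x y z) := by
  induction k with
  | zero => exact hh
  | succ k ih =>
    simp only [Function.iterate_succ_apply']
    exact hh.comp ih snd snd

end IsTermOp3

theorem IsCongruenceOn.termOp3_rel {ops : ∀ i : ι, (Fin (ar i) → A) → A} {B : Set A}
    {θ : A → A → Prop} (hθ : IsCongruenceOn ops B θ) {h : A → A → A → A}
    (hh : IsTermOp3 ops h) {x x' y y' z z' : A} (hx : θ x x') (hy : θ y y') (hz : θ z z') :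
    θ (h x y z) (h x' y' z') := by
  obtain ⟨t, ht⟩ := hh
  rw [ht, ht]
  refine Term.eval_rel ops hθ.2.2.2.2 t fun j => ?_
  fin_cases j <;> assumption

theorem exists_pos_isIdempotentElem_pow {M : Type*} [Monoid M] [Finite M] (x : M) :
    ∃ n, 0 < n ∧ IsIdempotentElem (x ^ n) := by
  obtain ⟨m, n, hmn, hpow⟩ := Finite.exists_ne_map_eq_of_infinite fun n : ℕ => x ^ n
  wlog hlt : m < n generalizing m n
  · exact this n m hmn.symm hpow.symm (by omega)
  obtain ⟨p, rfl⟩ := Nat.exists_eq_add_of_lt hlt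
  have periodic : ∀ j k, x ^ (m + j + k * (p + 1)) = x ^ (m + j) := by
    intro j k
    induction k with
    | zero => simp
    | succ k ih =>
      calc x ^ (m + j + (k + 1) * (p + 1))
          = x ^ (m + (p + 1)) * x ^ (j + k * (p + 1)) := by rw [← pow_add]; ring_nf
        _ = x ^ (m + j) := by rw [← add_assoc, ← hpow, ← pow_add, ← add_assoc, ih]
  -- a multiple of the period that is at least `m`
  refine ⟨(m + 1) * (p + 1), by positivity, ?_⟩
  have key := periodic (m * p + p + 1) (m + 1)
  rw [IsIdempotentElem, ← pow_add]
  convert key using 2 <;> ring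

theorem exists_pos_forall_isIdempotentElem_pow (M : Type*) [Monoid M] [Finite M] :
    ∃ n, 0 < n ∧ ∀ x : M, IsIdempotentElem (x ^ n) := by
  have := Fintype.ofFinite M
  choose n hn_pos hn using exists_pos_isIdempotentElem_pow (M := M)
  refine ⟨∏ x, n x, Finset.prod_pos fun x _ => hn_pos x, fun x => ?_⟩
  obtain ⟨k, hk⟩ := Finset.dvd_prod_of_mem n (Finset.mem_univ x)
  rw [hk, pow_mul]
  exact (hn x).pow k

theorem exists_pos_forall_iterate_idempotent (α : Type*) [Finite α] :
    ∃ n, 0 < n ∧ ∀ (f : α → α) x, f^[n] (f^[n] x) = f^[n] x := by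
  have : Finite (Function.End α) := inferInstanceAs (Finite (α → α))
  obtain ⟨n, hn_pos, hn⟩ := exists_pos_forall_isIdempotentElem_pow (Function.End α)
  exact ⟨n, hn_pos, fun f x => congrFun (hn f) x⟩

theorem iterate_rel_of_rel {α : Type*} {θ : α → α → Prop}
    (htrans : ∀ x y z, θ x y → θ y z → θ x z) {f : α → α} (hf : ∀ x y, θ x y → θ (f x) (f y))
    {a : α} (ha : θ (f a) a) (k : ℕ) {x : α} (hx : θ x a) : θ (f^[k] x) a := by
  induction k with
  | zero => exact hx
  | succ k ih =>
    rw [Function.iterate_succ_apply']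
    exact htrans _ _ _ (hf _ _ ih) ha

theorem stmt_8_general {ι : Type} {ar : ι → ℕ} {A : Type} [Fintype A]
    (ops : ∀ i : ι, (Fin (ar i) → A) → A)
    (h : A → A → A → A) (hh : IsTermOp3 ops h) :
    ∃ h' : A → A → A → A, IsTermOp3 ops h' ∧
      (∀ x y : A, h' (h' x y y) y y = h' x y y) ∧
      ∀ (a b : A) (θ : A → A → Prop),
        IsCongruenceOn ops (Sg ops ({a, b} : Set A)) θ →
        θ (h a b b) a → θ (h b b a) a →
        θ (h' a b b) a ∧ θ (h' b b a) a := by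
  obtain ⟨N, hN_pos, hN⟩ := exists_pos_forall_iterate_idempotent A
  obtain ⟨K, rfl⟩ := Nat.exists_eq_add_one_of_ne_zero hN_pos.ne'
  refine ⟨fun x y z => (fun u => h u y y)^[K] (h x y z), hh.iterate_fst K, fun x y => ?_, ?_⟩
  · simpa only [← Function.iterate_succ_apply] using hN (fun u => h u y y) x
  · intro a b θ hθ hab hba
    have hb : θ b b := hθ.2.1 b (subset_Sg ops _ (by simp))
    have hf : ∀ u v, θ u v → θ (h u b b) (h v b b) := fun u v huv =>
      hθ.termOp3_rel hh huv hb hb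
    exact ⟨iterate_rel_of_rel hθ.2.2.2.1 hf hab K hab,
      iterate_rel_of_rel hθ.2.2.2.1 hf hab K hba⟩

/-- any ternary term operation can be improved to one satisfying
`h'(h'(x,y,y), y, y) = h'(x,y,y)` while keeping its Maltsev-style behaviour
modulo any congruence of any 2-generated subalgebra. -/
theorem stmt_8 {ι : Type} {ar : ι → ℕ} {A : Type} [Fintype A] [Nonempty A]
    (ops : ∀ i : ι, (Fin (ar i) → A) → A)
    (hidem : Idempotent ops)
    (h : A → A → A → A) (hh : IsTermOp3 ops h) :
    ∃ h' : A → A → A → A, IsTermOp3 ops h' ∧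
      (∀ x y : A, h' (h' x y y) y y = h' x y y) ∧
      ∀ (a b : A) (θ : A → A → Prop),
        IsCongruenceOn ops (Sg ops ({a, b} : Set A)) θ →
        θ (h a b b) a → θ (h b b a) a →
        θ (h' a b b) a ∧ θ (h' b b a) a :=
  stmt_8_general ops h hh

end UA
end

section
/- Let A be a finite idempotent algebra, a,b ∈ A, B = Sg{a,b}, and θ a congruence of B with a^θ ≠ b^θ. Let f be a binary term operation of A such that: (i) f(x,y) θ b and f(y,x) θ b for all x ∈ a^θ and y ∈ b^θ; and (ii) for all x,y ∈ A, either f(x,y) = x or the element c = f(x,y) satisfies f(x,c) = f(c,x) = c. Then for every c ∈ a^θ there exists d ∈ b^θ such that f(c,d) = f(d,c) = d. -/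
namespace UA

variable {ι : Type} {ar : ι → ℕ} {A : Type}

theorem stmt_12_general {ι : Type} {ar : ι → ℕ} {A : Type}
    (ops : ∀ i : ι, (Fin (ar i) → A) → A)
    (a b : A) (θ : A → A → Prop)
    (hθ : IsCongruenceOn ops (Sg ops ({a, b} : Set A)) θ)
    (hneq : ¬ θ a b)
    (f : A → A → A)
    (hsl : ∀ x, θ a x → ∀ y, θ b y → θ (f x y) b ∧ θ (f y x) b)
    (hgood : ∀ x y : A, f x y = x ∨
      (f x (f x y) = f x y ∧ f (f x y) x = f x y)) :
    ∀ c, θ a c → ∃ d, θ b d ∧ f c d = d ∧ f d c = d := by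
  obtain ⟨-, hrefl, hsymm, htrans, -⟩ := hθ
  intro c hac
  have hbb : θ b b := hrefl b (subset_Sg ops _ (by simp))
  have hfcb : θ (f c b) b := (hsl c hac b hbb).1
  have hne : f c b ≠ c := fun h => hneq (htrans a c b hac (h ▸ hfcb))
  obtain ⟨hleft, hright⟩ := (hgood c b).resolve_left hne
  exact ⟨f c b, hsymm _ _ hfcb, hleft, hright⟩

/-- from a thick semilattice edge witnessed by `θ` on `Sg{a,b}`
and a good operation `f`, every `c ∈ a^θ` has `d ∈ b^θ` with
`f(c,d) = f(d,c) = d` (a thin semilattice edge). -/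
theorem stmt_12 {ι : Type} {ar : ι → ℕ} {A : Type} [Fintype A] [Nonempty A]
    (ops : ∀ i : ι, (Fin (ar i) → A) → A)
    (hidem : Idempotent ops)
    (a b : A) (θ : A → A → Prop)
    (hθ : IsCongruenceOn ops (Sg ops ({a, b} : Set A)) θ)
    (hneq : ¬ θ a b)
    (f : A → A → A) (hf : IsTermOp2 ops f)
    (hsl : ∀ x, θ a x → ∀ y, θ b y → θ (f x y) b ∧ θ (f y x) b)
    (hgood : ∀ x y : A, f x y = x ∨
      (f x (f x y) = f x y ∧ f (f x y) x = f x y)) :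
    ∀ c, θ a c → ∃ d, θ b d ∧ f c d = d ∧ f d c = d :=
  stmt_12_general ops a b θ hθ hneq f hsl hgood

end UA
end

section
/- Let A_1 and A_2 be finite idempotent algebras of the same signature, a,b ∈ A_1, and c,d ∈ A_2. Let θ be a congruence of Sg{a,b} in A_1 such that b ∈ Sg{a, b″} for every b″ ∈ b^θ. Let g be a ternary term of the common signature such that g^{A_1}(b,a,a) θ b and g^{A_2}(c,d,d) = d. Then there exists a binary term t such that t^{A_1}(b,a) = b and t^{A_2}(c,d) = d. -/
/-! Put `b' := g(b, a, a)`. Since `b' θ b`, the hypothesis gives `b ∈ Sg{a, b'}`, so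
`b = s(a, b')` for a binary term `s`. The term `t(x, y) := s(y, g(x, y, y))` then satisfies
`t(b, a) = s(a, b') = b` in `A1`, and `t(c, d) = s(d, d) = d` in `A2` by idempotency. -/

namespace UA

variable {ι : Type} {ar : ι → ℕ} {A : Type}

theorem Term.eval_const_of_idempotent {ops : ∀ i : ι, (Fin (ar i) → A) → A}
    (hid : Idempotent ops) {n : ℕ} (t : Term ι ar n) (x : A) :
    t.eval ops (fun _ => x) = x := by
  induction t with
  | var j => rfl
  | app i ts ih =>
    simp only [Term.eval, ih]
    exact hid i x

theorem exists_term_eval_eq_of_mem_Sg (ops : ∀ i : ι, (Fin (ar i) → A) → A) {n : ℕ}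
    (x : Fin n → A) {u : A} (hu : u ∈ Sg ops (Set.range x)) :
    ∃ t : Term ι ar n, t.eval ops x = u := by
  refine hu {u | ∃ t : Term ι ar n, t.eval ops x = u} ⟨?_, ?_⟩
  · intro i xs hxs
    choose ts hts using hxs
    exact ⟨.app i ts, congrArg (ops i) (funext hts)⟩
  · rintro _ ⟨j, rfl⟩
    exact ⟨.var j, rfl⟩

theorem exists_term_eval_eq_of_mem_Sg_pair (ops : ∀ i : ι, (Fin (ar i) → A) → A)
    {p q u : A} (hu : u ∈ Sg ops ({p, q} : Set A)) :
    ∃ t : Term ι ar 2, t.eval ops ![p, q] = u :=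
  exists_term_eval_eq_of_mem_Sg ops ![p, q] (by rwa [Matrix.range_cons_cons_empty])

theorem Term.eval_subst_swap_diag (ops : ∀ i : ι, (Fin (ar i) → A) → A)
    (s : Term ι ar 2) (g : Term ι ar 3) (x y : A) :
    (s.subst ![.var 1, g.subst ![.var 0, .var 1, .var 1]]).eval ops ![x, y] =
      s.eval ops ![y, g.eval ops ![x, y, y]] := by
  rw [Term.eval_subst]
  congr 1
  funext j
  fin_cases j
  · rfl
  · show (g.subst _).eval ops _ = _
    rw [Term.eval_subst]
    congr 1
    funext k
    fin_cases k <;> rfl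

theorem stmt_17_general {ι : Type} {ar : ι → ℕ} {A1 A2 : Type}
    (ops1 : ∀ i : ι, (Fin (ar i) → A1) → A1)
    (ops2 : ∀ i : ι, (Fin (ar i) → A2) → A2)
    (hid2 : Idempotent ops2)
    (a b : A1) (c d : A2)
    (θ : A1 → A1 → Prop)
    (hθ : IsCongruenceOn ops1 (Sg ops1 ({a, b} : Set A1)) θ)
    (hgen : ∀ b'', θ b b'' → b ∈ Sg ops1 ({a, b''} : Set A1))
    (g : Term ι ar 3)
    (hg1 : θ (g.eval ops1 ![b, a, a]) b)
    (hg2 : g.eval ops2 ![c, d, d] = d) :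
    ∃ t : Term ι ar 2,
      t.eval ops1 ![b, a] = b ∧ t.eval ops2 ![c, d] = d := by
  obtain ⟨s, hs⟩ := exists_term_eval_eq_of_mem_Sg_pair ops1 (hgen _ (hθ.2.2.1 _ _ hg1))
  refine ⟨s.subst ![.var 1, g.subst ![.var 0, .var 1, .var 1]], ?_, ?_⟩
  · rw [Term.eval_subst_swap_diag, hs]
  · rw [Term.eval_subst_swap_diag, hg2]
    convert s.eval_const_of_idempotent hid2 d using 2
    funext j
    fin_cases j <;> rfl

/-- a ternary term behaving affinely in `A1` (mod θ) and as a
majority-style operation in `A2` yields a binary term `t` with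
`t(b,a) = b` and `t(c,d) = d`. -/
theorem stmt_17 {ι : Type} {ar : ι → ℕ} {A1 A2 : Type}
    [Fintype A1] [Nonempty A1] [Fintype A2] [Nonempty A2]
    (ops1 : ∀ i : ι, (Fin (ar i) → A1) → A1)
    (ops2 : ∀ i : ι, (Fin (ar i) → A2) → A2)
    (hid1 : Idempotent ops1) (hid2 : Idempotent ops2)
    (a b : A1) (c d : A2)
    (θ : A1 → A1 → Prop)
    (hθ : IsCongruenceOn ops1 (Sg ops1 ({a, b} : Set A1)) θ)
    (hgen : ∀ b'', θ b b'' → b ∈ Sg ops1 ({a, b''} : Set A1))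
    (g : Term ι ar 3)
    (hg1 : θ (g.eval ops1 ![b, a, a]) b)
    (hg2 : g.eval ops2 ![c, d, d] = d) :
    ∃ t : Term ι ar 2,
      t.eval ops1 ![b, a] = b ∧ t.eval ops2 ![c, d] = d :=
  stmt_17_general ops1 ops2 hid2 a b c d θ hθ hgen g hg1 hg2

end UA
end

section
/- Let A be a finite idempotent algebra and f a binary term operation of A such that for all x,y ∈ A, either f(x,y) = x or the element c = f(x,y) satisfies f(x,c) = f(c,x) = c. Let R be a subuniverse of A × A with pr_1 R = pr_2 R = A, let S = {(c,d) ∈ A² : there is e ∈ A with (e,c) ∈ R and (e,d) ∈ R}, and assume the transitive closure of S is the total relation A × A. Then for any f-maximal elements a,b ∈ A there exist a sequence a = d_1, d_2, …, d_k and elements a_1,…,a_{k-1} ∈ A such that for every i < k: (d_i, d_{i+1}) ∈ S, (a_i, d_i) ∈ R, and (a_i, d_{i+1}) ∈ R; every d_i and every a_i is f-maximal; and d_k lies in the same strongly connected component of G_f as b. -/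
/-!
For `p ∈ R` the pair of translations `w ↦ f w p.1`, `d ↦ f d p.2` maps `R` into itself, and
by the hypothesis on `f` it moves every element forward in `G_f`. Composites of such pairs
realise every path of `G_f` in either coordinate, because both projections of `R` are onto.
Minimising the number of reachable vertices over all images yields a composite sending all of
`A` into maximal components; apply it to an `R`-linked chain from `a` to `b`, then bring the
image of `a` back to `a`, which is possible since `a` is maximal.
-/

namespace UA

variable {ι : Type} {ar : ι → ℕ} {A : Type}

/-- The arc relation of the digraph `G_f`: `c → d` iff `f(c,d) = f(d,c) = d`. -/
def Arc {A : Type} (f : A → A → A) (c d : A) : Prop :=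
  f c d = d ∧ f d c = d

/-- Reachability in `G_f`. -/
def Reach {A : Type} (f : A → A → A) : A → A → Prop :=
  Relation.ReflTransGen (Arc f)

/-- `a` is `f`-maximal: its strongly connected component in `G_f` has no arc
leaving it into a different component, i.e., everything reachable from `a`
reaches back to `a`. -/
def FMax {A : Type} (f : A → A → A) (a : A) : Prop :=
  ∀ x, Reach f a x → Reach f x a

theorem Term.eval_fst_snd_mem (ops : ∀ i : ι, (Fin (ar i) → A) → A) {R : Set (A × A)}
    (hR : ∀ (i : ι) (ps : Fin (ar i) → A × A), (∀ k, ps k ∈ R) →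
      (ops i (fun k => (ps k).1), ops i (fun k => (ps k).2)) ∈ R)
    {n : ℕ} (t : Term ι ar n) (v : Fin n → A × A) (hv : ∀ j, v j ∈ R) :
    (t.eval ops (fun j => (v j).1), t.eval ops (fun j => (v j).2)) ∈ R := by
  induction t with
  | var j => exact hv j
  | app i ts ih => exact hR i _ ih

theorem IsTermOp2.mem_of_mem {ops : ∀ i : ι, (Fin (ar i) → A) → A} {f : A → A → A}
    (hf : IsTermOp2 ops f) {R : Set (A × A)}
    (hR : ∀ (i : ι) (ps : Fin (ar i) → A × A), (∀ k, ps k ∈ R) →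
      (ops i (fun k => (ps k).1), ops i (fun k => (ps k).2)) ∈ R)
    {p q : A × A} (hp : p ∈ R) (hq : q ∈ R) : (f p.1 q.1, f p.2 q.2) ∈ R := by
  obtain ⟨t, ht⟩ := hf
  have hfst : (fun j => (![p, q] j).1) = ![p.1, q.1] := by ext j; fin_cases j <;> rfl
  have hsnd : (fun j => (![p, q] j).2) = ![p.2, q.2] := by ext j; fin_cases j <;> rfl
  rw [ht, ht, ← hfst, ← hsnd]
  exact Term.eval_fst_snd_mem ops hR t ![p, q] fun j => by fin_cases j <;> assumption

section Ascent

variable {f : A → A → A}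

theorem reach_self_mul
    (hgood : ∀ x y : A, f x y = x ∨ (f x (f x y) = f x y ∧ f (f x y) x = f x y))
    (x y : A) : Reach f x (f x y) := by
  rcases hgood x y with h | h
  · rw [h]
    exact .refl
  · exact Relation.ReflTransGen.single h

theorem FMax.of_reach {a c : A} (ha : FMax f a) (h : Reach f a c) : FMax f c :=
  fun x hx => (ha x (h.trans hx)).trans h

theorem exists_not_reach_of_not_fMax {x : A} (hx : ¬ FMax f x) :
    ∃ z, Reach f x z ∧ ¬ Reach f z x := by
  simpa [FMax] using hx

structure IsAscentPair (f : A → A → A) (R : Set (A × A)) (h g : A → A) : Prop where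
  reach_left : ∀ v, Reach f v (h v)
  reach_right : ∀ v, Reach f v (g v)
  mapsTo : Set.MapsTo (Prod.map h g) R R

variable {R : Set (A × A)} {h g h' g' : A → A}

theorem IsAscentPair.id : IsAscentPair f R id id :=
  ⟨fun _ => .refl, fun _ => .refl, Set.mapsTo_id R⟩

theorem IsAscentPair.comp (h₂ : IsAscentPair f R h' g') (h₁ : IsAscentPair f R h g) :
    IsAscentPair f R (h' ∘ h) (g' ∘ g) :=
  ⟨fun v => (h₁.reach_left v).trans (h₂.reach_left _),
    fun v => (h₁.reach_right v).trans (h₂.reach_right _), h₂.mapsTo.comp h₁.mapsTo⟩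

theorem IsAscentPair.of_swap (hp : IsAscentPair f (Prod.swap ⁻¹' R) g h) :
    IsAscentPair f R h g :=
  ⟨hp.reach_right, hp.reach_left, fun x hx => hp.mapsTo (x := x.swap) hx⟩

theorem isAscentPair_mul_right (hasc : ∀ x y : A, Reach f x (f x y))
    (hfR : ∀ p ∈ R, ∀ q ∈ R, (f p.1 q.1, f p.2 q.2) ∈ R) {p : A × A} (hp : p ∈ R) :
    IsAscentPair f R (f · p.1) (f · p.2) :=
  ⟨fun v => hasc v _, fun v => hasc v _, fun _ hq => hfR _ hq _ hp⟩

/-- Every arc `x → c` is realised as `x ↦ f x c`, and `c` is a second coordinate of `R`. -/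
theorem exists_isAscentPair_right_eq (hasc : ∀ x y : A, Reach f x (f x y))
    (hfR : ∀ p ∈ R, ∀ q ∈ R, (f p.1 q.1, f p.2 q.2) ∈ R)
    (hpr2 : ∀ x : A, ∃ p ∈ R, p.2 = x) {x z : A}
    (hxz : Reach f x z) : ∃ h g, IsAscentPair f R h g ∧ g x = z := by
  induction hxz using Relation.ReflTransGen.head_induction_on with
  | refl => exact ⟨id, id, .id, rfl⟩
  | @head x c harc _ ih =>
    obtain ⟨h, g, hp, rfl⟩ := ih
    obtain ⟨p, hpR, rfl⟩ := hpr2 c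
    exact ⟨_, _, hp.comp (isAscentPair_mul_right hasc hfR hpR), congrArg g harc.1⟩

theorem exists_isAscentPair_left_eq (hasc : ∀ x y : A, Reach f x (f x y))
    (hfR : ∀ p ∈ R, ∀ q ∈ R, (f p.1 q.1, f p.2 q.2) ∈ R)
    (hpr1 : ∀ x : A, ∃ p ∈ R, p.1 = x) {x z : A}
    (hxz : Reach f x z) : ∃ h g, IsAscentPair f R h g ∧ h x = z := by
  have hfR' : ∀ p ∈ Prod.swap ⁻¹' R, ∀ q ∈ Prod.swap ⁻¹' R,
      (f p.1 q.1, f p.2 q.2) ∈ Prod.swap ⁻¹' R := fun p hp q hq => hfR _ hp _ hq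
  obtain ⟨g, h, hp, hx⟩ := exists_isAscentPair_right_eq hasc hfR'
    (fun x => (hpr1 x).elim fun p hp => ⟨p.swap, hp⟩) hxz
  exact ⟨h, g, hp.of_swap, hx⟩

end Ascent

section Potential

variable [Fintype A] {f : A → A → A}

noncomputable def reachCard (f : A → A → A) (x : A) : ℕ := {y | Reach f x y}.ncard

theorem reachCard_le {x z : A} (h : Reach f x z) : reachCard f z ≤ reachCard f x :=
  Set.ncard_le_ncard (fun _ hy => h.trans hy) (Set.toFinite _)

theorem reachCard_lt {x z : A} (h : Reach f x z) (hzx : ¬ Reach f z x) :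
    reachCard f z < reachCard f x :=
  Set.ncard_lt_ncard ((Set.ssubset_iff_of_subset fun _ hy => h.trans hy).2
    ⟨x, .refl, hzx⟩) (Set.toFinite _)

theorem sum_reachCard_le {u u' : A → A} (hu : ∀ v, Reach f (u v) (u' v)) :
    ∑ v, reachCard f (u' v) ≤ ∑ v, reachCard f (u v) :=
  Finset.sum_le_sum fun v _ => reachCard_le (hu v)

theorem sum_reachCard_lt {u u' : A → A} (hu : ∀ v, Reach f (u v) (u' v)) {v₀ : A}
    (hv₀ : ¬ Reach f (u' v₀) (u v₀)) :
    ∑ v, reachCard f (u' v) < ∑ v, reachCard f (u v) :=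
  Finset.sum_lt_sum (fun v _ => reachCard_le (hu v))
    ⟨v₀, Finset.mem_univ _, reachCard_lt (hu v₀) hv₀⟩

theorem exists_isAscentPair_forall_fMax {R : Set (A × A)}
    (hasc : ∀ x y : A, Reach f x (f x y))
    (hfR : ∀ p ∈ R, ∀ q ∈ R, (f p.1 q.1, f p.2 q.2) ∈ R)
    (hpr1 : ∀ x : A, ∃ p ∈ R, p.1 = x) (hpr2 : ∀ x : A, ∃ p ∈ R, p.2 = x) :
    ∃ h g, IsAscentPair f R h g ∧ (∀ v, FMax f (h v)) ∧ ∀ v, FMax f (g v) := by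
  let Φ : (A → A) × (A → A) → ℕ := fun q =>
    ∑ v, reachCard f (q.1 v) + ∑ v, reachCard f (q.2 v)
  obtain ⟨⟨h, g⟩, hp, hmin⟩ :=
    (measure Φ).wf.has_min {q | IsAscentPair f R q.1 q.2} ⟨(id, id), .id⟩
  refine ⟨h, g, hp, fun v => ?_, fun v => ?_⟩
  · by_contra hv
    obtain ⟨z, hz, hzv⟩ := exists_not_reach_of_not_fMax hv
    obtain ⟨h', g', hp', rfl⟩ := exists_isAscentPair_left_eq hasc hfR hpr1 hz
    exact hmin (h' ∘ h, g' ∘ g) (hp'.comp hp) <| add_lt_add_of_lt_of_le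
      (sum_reachCard_lt (fun _ => hp'.reach_left _) hzv)
      (sum_reachCard_le fun _ => hp'.reach_right _)
  · by_contra hv
    obtain ⟨z, hz, hzv⟩ := exists_not_reach_of_not_fMax hv
    obtain ⟨h', g', hp', rfl⟩ := exists_isAscentPair_right_eq hasc hfR hpr2 hz
    exact hmin (h' ∘ h, g' ∘ g) (hp'.comp hp) <| add_lt_add_of_le_of_lt
      (sum_reachCard_le fun _ => hp'.reach_left _)
      (sum_reachCard_lt (fun _ => hp'.reach_right _) hzv)

end Potential

section Chain

variable {R : Set (A × A)}

def IsLinkedChain (R : Set (A × A)) {k : ℕ} (d : Fin (k + 1) → A) (w : Fin k → A) : Prop :=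
  ∀ i : Fin k, (w i, d i.castSucc) ∈ R ∧ (w i, d i.succ) ∈ R

theorem IsLinkedChain.map {k : ℕ} {d : Fin (k + 1) → A} {w : Fin k → A}
    (hc : IsLinkedChain R d w) {h g : A → A} (hmaps : Set.MapsTo (Prod.map h g) R R) :
    IsLinkedChain R (g ∘ d) (h ∘ w) :=
  fun i => ⟨hmaps (hc i).1, hmaps (hc i).2⟩

theorem exists_isLinkedChain_of_transGen {a b : A}
    (hab : Relation.TransGen (fun x y => ∃ e, (e, x) ∈ R ∧ (e, y) ∈ R) a b) :
    ∃ (k : ℕ) (d : Fin (k + 1) → A) (w : Fin k → A),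
      IsLinkedChain R d w ∧ d 0 = a ∧ d (Fin.last k) = b := by
  induction hab using Relation.TransGen.head_induction_on with
  | @single x hxb =>
    obtain ⟨e, hex, heb⟩ := hxb
    exact ⟨1, ![x, b], ![e], fun i => by fin_cases i; exact ⟨hex, heb⟩, rfl, rfl⟩
  | @head x c hxc _ ih =>
    obtain ⟨e, hex, hec⟩ := hxc
    obtain ⟨k, d, w, hc, rfl, rfl⟩ := ih
    refine ⟨k + 1, Fin.cons x d, Fin.cons e w, fun i => ?_, rfl, Fin.cons_last _ _⟩
    cases i using Fin.cases with
    | zero => exact ⟨hex, hec⟩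
    | succ j => simpa [← Fin.succ_castSucc] using hc j

end Chain

theorem stmt_18_general {ι : Type} {ar : ι → ℕ} {A : Type} [Fintype A]
    (ops : ∀ i : ι, (Fin (ar i) → A) → A)
    (f : A → A → A) (hf : IsTermOp2 ops f)
    (hgood : ∀ x y : A, f x y = x ∨
      (f x (f x y) = f x y ∧ f (f x y) x = f x y))
    (R : Set (A × A))
    (hRsub : ∀ (i : ι) (ps : Fin (ar i) → A × A), (∀ k, ps k ∈ R) →
      (ops i (fun k => (ps k).1), ops i (fun k => (ps k).2)) ∈ R)
    (hpr1 : ∀ x : A, ∃ p ∈ R, p.1 = x)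
    (hpr2 : ∀ x : A, ∃ p ∈ R, p.2 = x)
    (S : A → A → Prop)
    (hS : ∀ x y, S x y ↔ ∃ e, (e, x) ∈ R ∧ (e, y) ∈ R)
    (hStc : ∀ x y : A, Relation.TransGen S x y)
    (a b : A) (ha : FMax f a) (hb : FMax f b) :
    ∃ (k : ℕ) (d : Fin (k + 1) → A) (as : Fin k → A),
      d 0 = a ∧
      (∀ i : Fin k, S (d i.castSucc) (d i.succ) ∧
        (as i, d i.castSucc) ∈ R ∧ (as i, d i.succ) ∈ R) ∧
      (∀ i, FMax f (d i)) ∧ (∀ i, FMax f (as i)) ∧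
      Reach f (d (Fin.last k)) b ∧ Reach f b (d (Fin.last k)) := by
  obtain rfl : S = fun x y => ∃ e, (e, x) ∈ R ∧ (e, y) ∈ R :=
    funext₂ fun x y => propext (hS x y)
  have hasc := reach_self_mul hgood
  have hfR : ∀ p ∈ R, ∀ q ∈ R, (f p.1 q.1, f p.2 q.2) ∈ R :=
    fun _ hp _ hq => hf.mem_of_mem hRsub hp hq
  obtain ⟨k, d, w, hchain, rfl, rfl⟩ := exists_isLinkedChain_of_transGen (hStc a b)
  obtain ⟨h, g, hp, hh, hg⟩ := exists_isAscentPair_forall_fMax hasc hfR hpr1 hpr2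
  obtain ⟨h', g', hp', hg'⟩ :=
    exists_isAscentPair_right_eq hasc hfR hpr2 (ha _ (hp.reach_right (d 0)))
  have hlast : Reach f (d (Fin.last k)) (g' (g (d (Fin.last k)))) :=
    (hp'.comp hp).reach_right _
  refine ⟨k, g' ∘ g ∘ d, h' ∘ h ∘ w, hg', fun i => ?_,
    fun _ => (hg _).of_reach (hp'.reach_right _), fun _ => (hh _).of_reach (hp'.reach_left _),
    hb _ hlast, hlast⟩
  have hi := hchain.map (hp'.comp hp).mapsTo i
  exact ⟨⟨_, hi⟩, hi⟩

/-- going to maximal elements along a linked chain in a subdirect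
square. -/
theorem stmt_18 {ι : Type} {ar : ι → ℕ} {A : Type} [Fintype A] [Nonempty A]
    (ops : ∀ i : ι, (Fin (ar i) → A) → A)
    (hidem : Idempotent ops)
    (f : A → A → A) (hf : IsTermOp2 ops f)
    (hgood : ∀ x y : A, f x y = x ∨
      (f x (f x y) = f x y ∧ f (f x y) x = f x y))
    (R : Set (A × A))
    (hRsub : ∀ (i : ι) (ps : Fin (ar i) → A × A), (∀ k, ps k ∈ R) →
      (ops i (fun k => (ps k).1), ops i (fun k => (ps k).2)) ∈ R)
    (hpr1 : ∀ x : A, ∃ p ∈ R, p.1 = x)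
    (hpr2 : ∀ x : A, ∃ p ∈ R, p.2 = x)
    (S : A → A → Prop)
    (hS : ∀ x y, S x y ↔ ∃ e, (e, x) ∈ R ∧ (e, y) ∈ R)
    (hStc : ∀ x y : A, Relation.TransGen S x y)
    (a b : A) (ha : FMax f a) (hb : FMax f b) :
    ∃ (k : ℕ) (d : Fin (k + 1) → A) (as : Fin k → A),
      d 0 = a ∧
      (∀ i : Fin k, S (d i.castSucc) (d i.succ) ∧
        (as i, d i.castSucc) ∈ R ∧ (as i, d i.succ) ∈ R) ∧
      (∀ i, FMax f (d i)) ∧ (∀ i, FMax f (as i)) ∧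
      Reach f (d (Fin.last k)) b ∧ Reach f b (d (Fin.last k)) :=
  stmt_18_general ops f hf hgood R hRsub hpr1 hpr2 S hS hStc a b ha hb

end UA
end
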